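/- arXiv:2211.15882 — 2 statements merged into one kernel-verified Lean document; each statement's English description precedes it below -/
import Mathlib

section
/- Let D = D_α be the diagonal operator on E_ω associated with a bounded sequence α : ℕ → K. Assume that every value μ of the sequence α that is attained only finitely often (i.e. { i : α_i = μ } is nonempty and finite) is isolated from the other diagonal entries (there exists ε > 0 with ‖μ − α_i‖ ≥ ε for every i with α_i ≠ μ). Then the essential spectrum of D decomposes as σ_e(D) = σ'_e(D) ∪ σ''_e(D), where σ'_e(D) is the proper essential spectrum and σ''_e(D) is the improper essential spectrum of D. -/
open Filter Topology

/-- The non-Archimedean Hilbert space `E_ω`: the space of sequences `u : ℕ → K`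
such that `‖u i‖ * ‖ω i‖^(1/2) → 0`, as a submodule of `ℕ → K`. -/
def Eomega (K : Type*) [NontriviallyNormedField K] (ω : ℕ → K) : Submodule K (ℕ → K) where
  carrier := {u | Tendsto (fun i => ‖u i‖ * Real.sqrt ‖ω i‖) atTop (𝓝 0)}
  zero_mem' := by simpa using (tendsto_const_nhds : Tendsto (fun _ : ℕ => (0:ℝ)) atTop (𝓝 0))
  add_mem' := by
    intro u v hu hv
    have h := hu.add hv
    rw [add_zero] at h
    refine squeeze_zero (fun i => by positivity) (fun i => ?_) h
    calc ‖(u + v) i‖ * Real.sqrt ‖ω i‖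
        ≤ (‖u i‖ + ‖v i‖) * Real.sqrt ‖ω i‖ := by
          have : ‖(u + v) i‖ ≤ ‖u i‖ + ‖v i‖ := by
            simpa [Pi.add_apply] using norm_add_le (u i) (v i)
          exact mul_le_mul_of_nonneg_right this (Real.sqrt_nonneg _)
      _ = ‖u i‖ * Real.sqrt ‖ω i‖ + ‖v i‖ * Real.sqrt ‖ω i‖ := by ring
  smul_mem' := by
    intro c u hu
    have h := hu.const_mul ‖c‖
    rw [mul_zero] at h
    refine squeeze_zero (fun i => by positivity) (fun i => le_of_eq ?_) h
    simp [Pi.smul_apply, norm_smul, mul_assoc]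

lemma Eomega.bddAbove {K : Type*} [NontriviallyNormedField K] {ω : ℕ → K}
    (u : Eomega K ω) :
    BddAbove (Set.range fun i => ‖(u : ℕ → K) i‖ * Real.sqrt ‖ω i‖) :=
  u.2.bddAbove_range

/-- The sup-norm on `E_ω`: `‖u‖ = sup_i ‖u i‖ * ‖ω i‖^(1/2)`. -/
noncomputable instance Eomega.instSeminormedAddCommGroup
    {K : Type*} [NontriviallyNormedField K] {ω : ℕ → K} :
    SeminormedAddCommGroup (Eomega K ω) :=
  AddGroupSeminorm.toSeminormedAddCommGroup
    { toFun := fun u => ⨆ i, ‖(u : ℕ → K) i‖ * Real.sqrt ‖ω i‖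
      map_zero' := by simp
      add_le' := by
        intro u v
        refine ciSup_le fun i => ?_
        calc ‖((u + v : Eomega K ω) : ℕ → K) i‖ * Real.sqrt ‖ω i‖
            ≤ ‖(u : ℕ → K) i‖ * Real.sqrt ‖ω i‖ + ‖(v : ℕ → K) i‖ * Real.sqrt ‖ω i‖ := by
              have : ‖((u + v : Eomega K ω) : ℕ → K) i‖ ≤ ‖(u : ℕ → K) i‖ + ‖(v : ℕ → K) i‖ := by
                simpa using norm_add_le ((u : ℕ → K) i) ((v : ℕ → K) i)
              nlinarith [Real.sqrt_nonneg ‖ω i‖, norm_nonneg ((u : ℕ → K) i),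
                norm_nonneg ((v : ℕ → K) i)]
          _ ≤ _ := add_le_add (le_ciSup (Eomega.bddAbove u) i) (le_ciSup (Eomega.bddAbove v) i)
      neg' := by intro u; simp }


/-- Shortcut instance making sure that the topology of `E_ω` used below is the
norm topology (and not the topology induced by the product topology on
`ℕ → K`). -/
noncomputable instance (priority := 5000) Eomega.instTopologicalSpace
    {K : Type*} [NontriviallyNormedField K] {ω : ℕ → K} :
    TopologicalSpace (Eomega K ω) :=
  Eomega.instSeminormedAddCommGroup.toUniformSpace.toTopologicalSpace

/-- The diagonal operator `D = D_α` on `E_ω` associated with a bounded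
sequence `α : ℕ → K`, given by `(D u) i = α i * u i`. -/
def diagOp {K : Type*} [NontriviallyNormedField K] (ω : ℕ → K) (α : ℕ → K)
    (hα : ∃ C, ∀ i, ‖α i‖ ≤ C) : Eomega K ω →ₗ[K] Eomega K ω where
  toFun u := ⟨fun i => α i * (u : ℕ → K) i, by
    obtain ⟨C, hC⟩ := hα
    have h := u.2.const_mul C
    rw [mul_zero] at h
    refine squeeze_zero (fun i => by positivity) (fun i => ?_) h
    calc ‖α i * (u : ℕ → K) i‖ * Real.sqrt ‖ω i‖
        = ‖α i‖ * (‖(u : ℕ → K) i‖ * Real.sqrt ‖ω i‖) := by rw [norm_mul]; ring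
      _ ≤ C * (‖(u : ℕ → K) i‖ * Real.sqrt ‖ω i‖) :=
          mul_le_mul_of_nonneg_right (hC i) (by positivity)⟩
  map_add' u v := by
    apply Subtype.ext
    funext i
    simp [mul_add]
  map_smul' c u := by
    apply Subtype.ext
    funext i
    simp [Pi.smul_apply, smul_eq_mul]
    ring

/-- `T` is a Fredholm operator of index 0: its kernel is finite-dimensional,
its range is closed, and the quotient by the range is finite-dimensional of the
same dimension as the kernel. -/
def IsFredholm0 {K : Type*} [NontriviallyNormedField K] {ω : ℕ → K}
    (T : Eomega K ω →ₗ[K] Eomega K ω) : Prop :=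
  FiniteDimensional K (LinearMap.ker T) ∧
  IsClosed (LinearMap.range T : Set (Eomega K ω)) ∧
  FiniteDimensional K (Eomega K ω ⧸ LinearMap.range T) ∧
  Module.finrank K (LinearMap.ker T) =
    Module.finrank K (Eomega K ω ⧸ LinearMap.range T)

/-- The spectrum of `D`: those `μ` such that `μ·I − D` has no bounded (i.e.
continuous) two-sided inverse. -/
def specSet {K : Type*} [NontriviallyNormedField K] {ω : ℕ → K}
    (D : Eomega K ω →ₗ[K] Eomega K ω) : Set K :=
  {μ | ¬ ∃ S : Eomega K ω →ₗ[K] Eomega K ω, Continuous S ∧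
        S ∘ₗ (μ • LinearMap.id - D) = LinearMap.id ∧
        (μ • LinearMap.id - D) ∘ₗ S = LinearMap.id}

/-- The essential spectrum of `D`: those `μ` such that `μ·I − D` is not a
Fredholm operator of index 0. -/
def essSpec {K : Type*} [NontriviallyNormedField K] {ω : ℕ → K}
    (D : Eomega K ω →ₗ[K] Eomega K ω) : Set K :=
  {μ | ¬ IsFredholm0 (μ • LinearMap.id - D)}

/-- The proper essential spectrum of `D`: those `μ` in the spectrum such that
`μ·I − D` is injective but not surjective. -/
def properEssSpec {K : Type*} [NontriviallyNormedField K] {ω : ℕ → K}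
    (D : Eomega K ω →ₗ[K] Eomega K ω) : Set K :=
  {μ | μ ∈ specSet D ∧
       Function.Injective
         ⇑(μ • (LinearMap.id : Eomega K ω →ₗ[K] Eomega K ω) - D) ∧
       ¬ Function.Surjective
         ⇑(μ • (LinearMap.id : Eomega K ω →ₗ[K] Eomega K ω) - D)}

/-- The improper essential spectrum of `D`: those `μ` such that `N(μI − D)` is
infinite-dimensional. -/
def improperEssSpec {K : Type*} [NontriviallyNormedField K] {ω : ℕ → K}
    (D : Eomega K ω →ₗ[K] Eomega K ω) : Set K :=
  {μ | ¬ FiniteDimensional K (LinearMap.ker (μ • LinearMap.id - D))}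

/-!
`μ • id - D_α` is again a diagonal operator, with entries `β i = μ - α i`. If `β` vanishes
infinitely often, the kernel contains infinitely many independent unit vectors. If `β` vanishes
on a finite set `Z` and is bounded away from `0` off `Z`, the kernel and the cokernel are both
identified with `Z → K` (the range is the closed subspace of sequences vanishing on `Z`), so the
operator is Fredholm of index `0`. In the remaining case the isolation hypothesis forces `Z = ∅`
while `β → 0` along a subsequence `φ`: the operator is injective, and `β * w`, for `w` of unit
size in every coordinate and supported on the range of `φ`, lies in `E_ω` without being in the
range. Conversely, for any operator the proper and improper essential spectra lie in the
essential spectrum, since an injective Fredholm operator of index `0` is surjective.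
-/

lemma infinite_setOf_lt_of_forall_exists_lt {ι : Type*} {f : ι → ℝ} (hpos : ∀ i, 0 < f i)
    (hsmall : ∀ ε > 0, ∃ i, f i < ε) {δ : ℝ} (hδ : 0 < δ) : {i | f i < δ}.Infinite := by
  intro hfin
  have hε : ∀ᶠ ε in 𝓝[>] (0 : ℝ), 0 < ε ∧ ε < δ ∧ ∀ i ∈ {i | f i < δ}, ε < f i :=
    eventually_mem_nhdsWithin.and <| nhdsWithin_le_nhds <| (gt_mem_nhds hδ).and <|
      hfin.eventually_all.2 fun i _ => gt_mem_nhds (hpos i)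
  obtain ⟨ε, hε0, hεδ, hεf⟩ := hε.exists
  obtain ⟨i, hi⟩ := hsmall ε hε0
  exact (hεf i (hi.trans hεδ)).not_gt hi

lemma exists_strictMono_tendsto_zero {f : ℕ → ℝ} (hpos : ∀ i, 0 < f i)
    (hsmall : ∀ ε > 0, ∃ i, f i < ε) :
    ∃ φ : ℕ → ℕ, StrictMono φ ∧ Tendsto (f ∘ φ) atTop (𝓝 0) := by
  obtain ⟨φ, hφ, hlt⟩ := extraction_forall_of_frequently fun k : ℕ =>
    Nat.frequently_atTop_iff_infinite.2 <|
      infinite_setOf_lt_of_forall_exists_lt hpos hsmall (Nat.one_div_pos_of_nat (n := k))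
  exact ⟨φ, hφ, squeeze_zero (fun k => (hpos _).le) (fun k => (hlt k).le)
    tendsto_one_div_add_atTop_nhds_zero_nat⟩

lemma NormedField.exists_norm_mul_mem_Icc (K : Type*) [NontriviallyNormedField K] :
    ∃ C, ∀ r > 0, ∃ w : K, 1 ≤ ‖w‖ * r ∧ ‖w‖ * r ≤ C := by
  obtain ⟨c, hc⟩ := NormedField.exists_one_lt_norm K
  refine ⟨‖c‖, fun r hr => ?_⟩
  obtain ⟨n, hn, hn'⟩ := exists_mem_Ico_zpow hr hc
  have hcn : 0 < ‖c‖ ^ n := zpow_pos (one_pos.trans hc) n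
  refine ⟨(c ^ n)⁻¹, ?_, ?_⟩ <;> rw [norm_inv, norm_zpow, inv_mul_eq_div]
  · exact (one_le_div hcn).2 hn
  · rw [div_le_iff₀ hcn, ← zpow_one_add₀ (one_pos.trans hc).ne']
    rw [add_comm]; exact hn'.le

namespace Eomega

variable {K : Type*} [NontriviallyNormedField K] {ω : ℕ → K}

lemma norm_apply_mul_le (u : Eomega K ω) (i : ℕ) :
    ‖(u : ℕ → K) i‖ * Real.sqrt ‖ω i‖ ≤ ‖u‖ :=
  le_ciSup (Eomega.bddAbove u) i

lemma continuous_apply {j : ℕ} (hj : ω j ≠ 0) :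
    Continuous fun u : Eomega K ω => (u : ℕ → K) j := by
  have hpos : 0 < Real.sqrt ‖ω j‖ := Real.sqrt_pos.2 (norm_pos_iff.2 hj)
  refine AddMonoidHomClass.continuous_of_bound
    ((LinearMap.proj j).comp (Eomega K ω).subtype) (Real.sqrt ‖ω j‖)⁻¹ fun u => ?_
  rw [inv_mul_eq_div, le_div_iff₀ hpos]
  exact norm_apply_mul_le u j

lemma mem_of_finite_support {f : ℕ → K} (hf : (Function.support f).Finite) :
    f ∈ Eomega K ω := by
  have hzero : ∀ᶠ i in atTop, f i = 0 := by
    rw [← Nat.cofinite_eq_atTop]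
    exact Filter.mem_of_superset hf.compl_mem_cofinite fun i => Function.notMem_support.1
  refine tendsto_const_nhds.congr' ?_
  filter_upwards [hzero] with i hi
  simp [hi]

lemma indicator_range_mem_of_tendsto {φ : ℕ → ℕ} (hφ : StrictMono φ) {v : ℕ → K}
    (hv : Tendsto (fun k => ‖v (φ k)‖ * Real.sqrt ‖ω (φ k)‖) atTop (𝓝 0)) :
    (Set.range φ).indicator v ∈ Eomega K ω := by
  show Tendsto _ _ _
  rw [Metric.tendsto_atTop] at hv ⊢
  intro ε hε
  obtain ⟨N, hN⟩ := hv ε hε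
  refine ⟨φ N, fun i hi => ?_⟩
  by_cases h : i ∈ Set.range φ
  · obtain ⟨k, rfl⟩ := h
    simpa [Set.indicator_of_mem] using hN k (hφ.le_iff_le.1 hi)
  · simpa [Set.indicator_of_notMem h] using hε

variable (ω) in
def restrict (s : Set ℕ) : Eomega K ω →ₗ[K] (s → K) :=
  LinearMap.pi fun j => (LinearMap.proj (j : ℕ)).comp (Eomega K ω).subtype

@[simp] lemma restrict_apply (s : Set ℕ) (u : Eomega K ω) (j : s) :
    restrict ω s u j = (u : ℕ → K) j := rfl

lemma continuous_restrict (hω : ∀ i, ω i ≠ 0) (s : Set ℕ) :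
    Continuous (restrict ω s) :=
  continuous_pi fun j => continuous_apply (hω j)

lemma exists_restrict_eq {s : Set ℕ} (hs : s.Finite) (f : s → K) :
    ∃ u : Eomega K ω, restrict ω s u = f ∧ ∀ i ∉ s, (u : ℕ → K) i = 0 := by
  classical
  have hmem : Function.extend Subtype.val f 0 ∈ Eomega K ω := by
    refine mem_of_finite_support (hs.subset fun i hi => ?_)
    by_contra h
    exact hi (Function.extend_apply' _ _ _ fun ⟨j, hj⟩ => h (hj ▸ j.2))
  refine ⟨⟨_, hmem⟩, funext fun j => Subtype.val_injective.extend_apply _ _ _, fun i hi => ?_⟩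
  exact Function.extend_apply' _ _ _ fun ⟨j, hj⟩ => hi (hj ▸ j.2)

end Eomega

section diagOp

variable {K : Type*} [NontriviallyNormedField K] {ω : ℕ → K}

@[simp] lemma diagOp_apply (β : ℕ → K) (hβ : ∃ C, ∀ i, ‖β i‖ ≤ C) (u : Eomega K ω) (i : ℕ) :
    ((diagOp ω β hβ u : Eomega K ω) : ℕ → K) i = β i * (u : ℕ → K) i := rfl

lemma smul_id_sub_diagOp (α : ℕ → K) (hα : ∃ C, ∀ i, ‖α i‖ ≤ C) (μ : K)
    (hβ : ∃ C, ∀ i, ‖μ - α i‖ ≤ C) :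
    μ • LinearMap.id - diagOp ω α hα = diagOp ω (fun i => μ - α i) hβ := by
  ext u i
  simp [sub_mul]

variable (β : ℕ → K) (hβ : ∃ C, ∀ i, ‖β i‖ ≤ C)

lemma mem_ker_diagOp_iff {u : Eomega K ω} :
    u ∈ LinearMap.ker (diagOp ω β hβ) ↔ ∀ i, β i ≠ 0 → (u : ℕ → K) i = 0 := by
  simp only [LinearMap.mem_ker, Subtype.ext_iff, funext_iff, diagOp_apply,
    ZeroMemClass.coe_zero, Pi.zero_apply, mul_eq_zero]
  exact forall_congr' fun i => or_iff_not_imp_left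

lemma injective_diagOp (hβ0 : ∀ i, β i ≠ 0) : Function.Injective (diagOp ω β hβ) := by
  rw [← LinearMap.ker_eq_bot, eq_bot_iff]
  intro u hu
  rw [mem_ker_diagOp_iff] at hu
  exact Subtype.ext (funext fun i => hu i (hβ0 i))

lemma not_finiteDimensional_ker_diagOp (hZ : {i | β i = 0}.Infinite) :
    ¬ FiniteDimensional K (LinearMap.ker (diagOp ω β hβ)) := by
  classical
  intro hfin
  let e : {i | β i = 0} → LinearMap.ker (diagOp ω β hβ) := fun j =>
    ⟨⟨Pi.single (j : ℕ) 1, Eomega.mem_of_finite_support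
      ((Set.finite_singleton (j : ℕ)).subset Pi.support_single_subset)⟩,
      (mem_ker_diagOp_iff β hβ).2 fun i hi => Pi.single_eq_of_ne (fun h : i = j => hi (h ▸ j.2)) _⟩
  have he : LinearIndependent K e :=
    LinearIndependent.of_comp ((Eomega K ω).subtype ∘ₗ (LinearMap.ker _).subtype)
      ((Pi.linearIndependent_single_one ℕ K).comp _ Subtype.val_injective)
  exact hZ (Set.finite_coe_iff.1 he.finite)

lemma bijective_restrict_comp_ker_subtype (hZ : {i | β i = 0}.Finite) :
    Function.Bijective
      ((Eomega.restrict ω {i | β i = 0}).comp (LinearMap.ker (diagOp ω β hβ)).subtype) := by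
  refine ⟨(injective_iff_map_eq_zero _).2 fun u hu => ?_, fun f => ?_⟩
  · have hker := (mem_ker_diagOp_iff β hβ).1 u.2
    refine Subtype.ext (Subtype.ext (funext fun i => ?_))
    by_cases hi : β i = 0
    · exact congrFun hu ⟨i, hi⟩
    · exact hker i hi
  · obtain ⟨u, hu, hu0⟩ := Eomega.exists_restrict_eq (ω := ω) hZ f
    exact ⟨⟨u, (mem_ker_diagOp_iff β hβ).2 fun i hi => hu0 i hi⟩, hu⟩

lemma range_diagOp_eq_ker_restrict {ε : ℝ} (hε : 0 < ε)
    (hsep : ∀ i, β i ≠ 0 → ε ≤ ‖β i‖) :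
    LinearMap.range (diagOp ω β hβ) = LinearMap.ker (Eomega.restrict ω {i | β i = 0}) := by
  have hinv : ∃ C, ∀ i, ‖(β i)⁻¹‖ ≤ C := ⟨ε⁻¹, fun i => by
    by_cases hi : β i = 0
    · simp [hi, hε.le]
    · rw [norm_inv]
      exact inv_anti₀ hε (hsep i hi)⟩
  ext v
  simp only [LinearMap.mem_range, LinearMap.mem_ker]
  constructor
  · rintro ⟨u, rfl⟩
    ext ⟨j, hj⟩
    simp [show β j = 0 from hj]
  · intro hv
    -- off the zero set of `β`, divide by `β`; on it, `v` vanishes and `0⁻¹ = 0`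
    refine ⟨diagOp ω (fun i => (β i)⁻¹) hinv v, Subtype.ext (funext fun i => ?_)⟩
    by_cases hi : β i = 0
    · simpa [hi] using (congrFun hv ⟨i, hi⟩).symm
    · simp [hi]

lemma isFredholm0_diagOp (hω : ∀ i, ω i ≠ 0) (hZ : {i | β i = 0}.Finite) {ε : ℝ} (hε : 0 < ε)
    (hsep : ∀ i, β i ≠ 0 → ε ≤ ‖β i‖) :
    IsFredholm0 (diagOp ω β hβ) := by
  have : Finite {i | β i = 0} := hZ.to_subtype
  let eKer := LinearEquiv.ofBijective _ (bijective_restrict_comp_ker_subtype (ω := ω) β hβ hZ)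
  let eCoker := (Submodule.quotEquivOfEq _ _ (range_diagOp_eq_ker_restrict β hβ hε hsep)).trans
    ((Eomega.restrict ω _).quotKerEquivOfSurjective fun f =>
      (Eomega.exists_restrict_eq hZ f).imp fun _ h => h.1)
  refine ⟨eKer.symm.finiteDimensional, ?_, eCoker.symm.finiteDimensional,
    eKer.finrank_eq.trans eCoker.finrank_eq.symm⟩
  rw [range_diagOp_eq_ker_restrict β hβ hε hsep]
  exact isClosed_singleton.preimage (Eomega.continuous_restrict hω _)

lemma not_surjective_diagOp (hω : ∀ i, ω i ≠ 0) (hβ0 : ∀ i, β i ≠ 0)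
    (hsmall : ∀ ε > 0, ∃ i, ‖β i‖ < ε) :
    ¬ Function.Surjective (diagOp ω β hβ) := by
  obtain ⟨φ, hφ, hφ0⟩ := exists_strictMono_tendsto_zero (f := fun i => ‖β i‖)
    (fun i => norm_pos_iff.2 (hβ0 i)) hsmall
  obtain ⟨C, hC⟩ := NormedField.exists_norm_mul_mem_Icc K
  choose w hw1 hwC using fun i => hC (Real.sqrt ‖ω i‖) (Real.sqrt_pos.2 (norm_pos_iff.2 (hω i)))
  -- a preimage of `β * w` must agree with `w` along `φ`, where `w` does not decay
  have hv : (Set.range φ).indicator (fun i => β i * w i) ∈ Eomega K ω := by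
    refine Eomega.indicator_range_mem_of_tendsto hφ <|
      squeeze_zero (fun _ => by positivity) (fun k => ?_) (by simpa using hφ0.mul_const C)
    rw [norm_mul, mul_assoc]
    exact mul_le_mul_of_nonneg_left (hwC _) (norm_nonneg _)
  intro hsurj
  obtain ⟨u, hu⟩ := hsurj ⟨_, hv⟩
  have huw : ∀ k, (u : ℕ → K) (φ k) = w (φ k) := fun k => by
    have h := congrFun (congrArg Subtype.val hu) (φ k)
    change _ = (Set.range φ).indicator (fun i => β i * w i) (φ k) at h
    rw [diagOp_apply, Set.indicator_of_mem (Set.mem_range_self k)] at h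
    exact mul_left_cancel₀ (hβ0 _) h
  obtain ⟨k, hk⟩ := ((u.2.comp hφ.tendsto_atTop).eventually (gt_mem_nhds one_pos)).exists
  exact (hw1 (φ k)).not_gt (by simpa [huw k] using hk)

end diagOp

section spectrum

variable {K : Type*} [NontriviallyNormedField K] {ω : ℕ → K}

lemma IsFredholm0.surjective_of_injective {T : Eomega K ω →ₗ[K] Eomega K ω}
    (hT : IsFredholm0 T) (hinj : Function.Injective T) : Function.Surjective T := by
  obtain ⟨-, -, hfin, hrank⟩ := hT
  rw [LinearMap.ker_eq_bot.2 hinj, finrank_bot, eq_comm, Module.finrank_zero_iff] at hrank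
  rwa [← LinearMap.range_eq_top, ← Submodule.Quotient.subsingleton_iff]

lemma mem_properEssSpec_of_injective_of_not_surjective {D : Eomega K ω →ₗ[K] Eomega K ω} {μ : K}
    (hinj : Function.Injective ⇑(μ • (LinearMap.id : Eomega K ω →ₗ[K] Eomega K ω) - D))
    (hsurj : ¬ Function.Surjective ⇑(μ • (LinearMap.id : Eomega K ω →ₗ[K] Eomega K ω) - D)) :
    μ ∈ properEssSpec D := by
  refine ⟨?_, hinj, hsurj⟩
  rintro ⟨S, -, -, hS⟩
  exact hsurj fun v => ⟨S v, LinearMap.congr_fun hS v⟩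

lemma properEssSpec_union_improperEssSpec_subset (D : Eomega K ω →ₗ[K] Eomega K ω) :
    properEssSpec D ∪ improperEssSpec D ⊆ essSpec D := by
  rintro μ (⟨-, hinj, hsurj⟩ | hker) hF
  · exact hsurj (hF.surjective_of_injective hinj)
  · exact hker hF.1

end spectrum

theorem stmt11_general {K : Type*} [NontriviallyNormedField K]
    (ω : ℕ → K) (hω : ∀ i, ω i ≠ 0)
    (α : ℕ → K) (hα : ∃ C, ∀ i, ‖α i‖ ≤ C)
    (hisol : ∀ μ : K, {i : ℕ | α i = μ}.Nonempty → {i : ℕ | α i = μ}.Finite →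
      ∃ ε > 0, ∀ i : ℕ, α i ≠ μ → ε ≤ ‖μ - α i‖) :
    essSpec (diagOp ω α hα) =
      properEssSpec (diagOp ω α hα) ∪ improperEssSpec (diagOp ω α hα) := by
  refine Set.Subset.antisymm (fun μ hμ => ?_) (properEssSpec_union_improperEssSpec_subset _)
  have hβ : ∃ C, ∀ i, ‖μ - α i‖ ≤ C :=
    let ⟨C, hC⟩ := hα
    ⟨‖μ‖ + C, fun i => (norm_sub_le _ _).trans (by gcongr; exact hC i)⟩
  have hT := smul_id_sub_diagOp (ω := ω) α hα μ hβ
  have hZ : {i | μ - α i = 0} = {i | α i = μ} := by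
    ext i
    simp [sub_eq_zero, eq_comm]
  rcases Set.finite_or_infinite {i | α i = μ} with hfin | hinf
  · by_cases hsep : ∃ ε > 0, ∀ i, α i ≠ μ → ε ≤ ‖μ - α i‖
    · obtain ⟨ε, hε, hsep⟩ := hsep
      refine absurd ?_ hμ
      rw [hT]
      exact isFredholm0_diagOp _ hβ hω (hZ ▸ hfin) hε
        fun i hi => hsep i fun h => hi (sub_eq_zero.2 h.symm)
    · have hne : ∀ i, μ - α i ≠ 0 := fun i hi =>
        hsep (hisol μ ⟨i, (sub_eq_zero.1 hi).symm⟩ hfin)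
      push Not at hsep
      refine Or.inl (mem_properEssSpec_of_injective_of_not_surjective ?_ ?_) <;> rw [hT]
      · exact injective_diagOp _ hβ hne
      · exact not_surjective_diagOp _ hβ hω hne fun ε hε => (hsep ε hε).imp fun _ h => h.2
  · refine Or.inr ?_
    rw [improperEssSpec, Set.mem_ofPred_eq, hT]
    exact not_finiteDimensional_ker_diagOp _ hβ (hZ ▸ hinf)

/-- If every value of `α` attained only finitely often is
isolated from the other diagonal entries, the essential spectrum of `D`
decomposes as `σ_e(D) = σ'_e(D) ∪ σ''_e(D)`. -/
theorem stmt11 {K : Type*} [NontriviallyNormedField K] [CompleteSpace K]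
    (hna : ∀ x y : K, ‖x + y‖ ≤ max ‖x‖ ‖y‖)
    (ω : ℕ → K) (hω : ∀ i, ω i ≠ 0)
    (α : ℕ → K) (hα : ∃ C, ∀ i, ‖α i‖ ≤ C)
    (hisol : ∀ μ : K, {i : ℕ | α i = μ}.Nonempty → {i : ℕ | α i = μ}.Finite →
      ∃ ε > 0, ∀ i : ℕ, α i ≠ μ → ε ≤ ‖μ - α i‖) :
    essSpec (diagOp ω α hα) =
      properEssSpec (diagOp ω α hα) ∪ improperEssSpec (diagOp ω α hα) :=
  stmt11_general ω hω α hα hisol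
end

section
/- Let D = D_α be the diagonal operator on E_ω associated with a bounded sequence α : ℕ → K, and let Λ = { α_i : i ∈ ℕ } be the set of its diagonal entries. Then the proper essential spectrum of D equals the boundary set of Λ: σ'_e(D) = closure(Λ) \ Λ. -/
open Filter Topology

/-!
On coordinates `μ • I - D` is multiplication by `μ - α i`. It kills the basis vector `e_j` when
`μ = α j`; it has the bounded inverse "divide by `μ - α i`" when `μ` stays away from `Λ`. If
`μ ∈ closure Λ \ Λ`, then `μ` is a cluster point of `α`, so `μ - α i → 0` along a
subsequence. A vector supported on that subsequence, with weighted norm comparable to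
`‖μ - α i‖`, lies in `E_ω` while its quotient by `μ - α` has weighted norm bounded below,
so it is not in the range.
-/

open Set

theorem mapClusterPt_atTop_of_mem_closure_range {X : Type*} [TopologicalSpace X] [T1Space X]
    {u : ℕ → X} {x : X} (hx : x ∈ closure (range u)) (hx' : x ∉ range u) :
    MapClusterPt x atTop u := by
  rw [mapClusterPt_atTop_iff_forall_mem_closure]
  intro N
  rw [← image_univ, ← Iio_union_Ici, image_union, closure_union,
    ((finite_Iio N).image u).isClosed.closure_eq] at hx
  exact hx.resolve_left fun h => hx' (image_subset_range _ _ h)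

theorem tendsto_of_tendsto_comp_of_eqOn_compl_range {X : Type*} [TopologicalSpace X]
    {f : ℕ → X} {ψ : ℕ → ℕ} {x : X} (hψ : StrictMono ψ)
    (hfψ : Tendsto (f ∘ ψ) atTop (𝓝 x))
    (hf : EqOn f (fun _ => x) (range ψ)ᶜ) : Tendsto f atTop (𝓝 x) := by
  intro s hs
  obtain ⟨N, hN⟩ := eventually_atTop.1 (hfψ hs)
  refine eventually_atTop.2 ⟨ψ N, fun i hi => ?_⟩
  by_cases hi' : i ∈ range ψ
  · obtain ⟨k, rfl⟩ := hi'
    exact hN k (hψ.le_iff_le.1 hi)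
  · rw [hf hi']
    exact mem_of_mem_nhds hs

theorem NormedField.exists_norm_mul_mem_Ico {K : Type*} [NontriviallyNormedField K] {c : K}
    (hc : 1 < ‖c‖) {r s : ℝ} (hr : 0 < r) (hs : 0 < s) :
    ∃ x : K, r / ‖c‖ ≤ ‖x‖ * s ∧ ‖x‖ * s < r := by
  obtain ⟨d, -, hlt, hge, -⟩ := rescale_to_shell hc (div_pos hr hs) (one_ne_zero (α := K))
  rw [smul_eq_mul, mul_one] at hlt hge
  refine ⟨d, ?_, (lt_div_iff₀ hs).1 hlt⟩
  rwa [div_div, mul_comm s, ← div_div, div_le_iff₀ hs] at hge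

namespace Eomega

variable {K : Type*} [NontriviallyNormedField K] {ω : ℕ → K}

theorem single_mem (j : ℕ) (x : K) : Pi.single j x ∈ Eomega K ω := by
  refine tendsto_const_nhds.congr' (eventually_atTop.2 ⟨j + 1, fun i hi => ?_⟩)
  simp [Pi.single_eq_of_ne (by omega : i ≠ j)]

theorem mul_mem {a u : ℕ → K} {C : ℝ} (ha : ∀ i, ‖a i‖ ≤ C) (hu : u ∈ Eomega K ω) :
    (fun i => a i * u i) ∈ Eomega K ω := by
  have h := hu.const_mul C
  rw [mul_zero] at h
  refine squeeze_zero (fun i => by positivity) (fun i => ?_) h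
  rw [norm_mul, mul_assoc]
  exact mul_le_mul_of_nonneg_right (ha i) (by positivity)

theorem exists_mem_div_notMem (hω : ∀ i, ω i ≠ 0) {β : ℕ → K} (hβ : ∀ i, β i ≠ 0)
    {ψ : ℕ → ℕ} (hψ : StrictMono ψ) (hβψ : Tendsto (β ∘ ψ) atTop (𝓝 0)) :
    ∃ u ∈ Eomega K ω, (fun i => u i / β i) ∉ Eomega K ω := by
  obtain ⟨b, hb⟩ := NormedField.exists_one_lt_norm K
  have hω' : ∀ i, 0 < Real.sqrt ‖ω i‖ := fun i => Real.sqrt_pos.2 (norm_pos_iff.2 (hω i))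
  choose c hc_ge hc_lt using fun i =>
    NormedField.exists_norm_mul_mem_Ico hb (norm_pos_iff.2 (hβ i)) (hω' i)
  refine ⟨(range ψ).indicator c, ?_, fun hdiv => ?_⟩
  · refine tendsto_of_tendsto_comp_of_eqOn_compl_range hψ ?_ fun i hi => ?_
    · refine squeeze_zero (fun k => mul_nonneg (norm_nonneg _) (Real.sqrt_nonneg _)) (fun k => ?_)
        (tendsto_zero_iff_norm_tendsto_zero.1 hβψ)
      simpa [indicator_of_mem (mem_range_self k)] using (hc_lt (ψ k)).le
    · simp [indicator_of_notMem hi]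
  · have hlower :
        ∀ k, 1 / ‖b‖ ≤ ‖(range ψ).indicator c (ψ k) / β (ψ k)‖ * Real.sqrt ‖ω (ψ k)‖ := by
      intro k
      have hβk := norm_pos_iff.2 (hβ (ψ k))
      rw [indicator_of_mem (mem_range_self k), norm_div, div_mul_eq_mul_div, le_div_iff₀ hβk,
        one_div_mul_eq_div]
      exact hc_ge (ψ k)
    have := ge_of_tendsto' (hdiv.comp hψ.tendsto_atTop) hlower
    linarith [one_div_pos.2 (one_pos.trans hb)]

end Eomega

section diagOp

variable {K : Type*} [NontriviallyNormedField K] {ω α : ℕ → K}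
  {hα : ∃ C, ∀ i, ‖α i‖ ≤ C} {μ : K}

theorem sub_diagOp_apply (u : Eomega K ω) (i : ℕ) :
    (((μ • LinearMap.id - diagOp ω α hα : Eomega K ω →ₗ[K] Eomega K ω) u : Eomega K ω) : ℕ → K) i =
      (μ - α i) * (u : ℕ → K) i := by
  simp [diagOp, sub_mul]

theorem injective_sub_diagOp_iff :
    Function.Injective (μ • LinearMap.id - diagOp ω α hα : Eomega K ω →ₗ[K] Eomega K ω) ↔
      μ ∉ range α := by
  constructor
  · rintro hinj ⟨j, rfl⟩
    let e : Eomega K ω := ⟨Pi.single j 1, Eomega.single_mem j 1⟩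
    have he : e ≠ 0 := fun h => by simpa [e] using congr_fun (congrArg Subtype.val h) j
    refine he (hinj ?_)
    rw [map_zero]
    ext i
    rw [sub_diagOp_apply]
    by_cases h : i = j <;> simp [e, h]
  · intro hμ
    rw [← LinearMap.ker_eq_bot, LinearMap.ker_eq_bot']
    intro u hu
    ext i
    have := congr_fun (congrArg Subtype.val hu) i
    rw [sub_diagOp_apply] at this
    exact (mul_eq_zero.1 this).resolve_left (sub_ne_zero.2 fun h => hμ ⟨i, h.symm⟩)

theorem surjective_sub_diagOp_of_notMem_closure (hμ : μ ∉ closure (range α)) :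
    Function.Surjective (μ • LinearMap.id - diagOp ω α hα : Eomega K ω →ₗ[K] Eomega K ω) := by
  rw [Metric.mem_closure_range_iff] at hμ
  push Not at hμ
  obtain ⟨δ, hδ, hδα⟩ := hμ
  have hδα' : ∀ i, δ ≤ ‖μ - α i‖ := fun i => dist_eq_norm μ (α i) ▸ hδα i
  have hne : ∀ i, μ - α i ≠ 0 := fun i => norm_pos_iff.1 (hδ.trans_le (hδα' i))
  intro u
  have hbound : ∀ i, ‖(μ - α i)⁻¹‖ ≤ δ⁻¹ := fun i => by
    rw [norm_inv]
    exact inv_anti₀ hδ (hδα' i)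
  refine ⟨⟨_, Eomega.mul_mem hbound u.2⟩, ?_⟩
  ext i
  rw [sub_diagOp_apply]
  exact mul_inv_cancel_left₀ (hne i) _

theorem not_surjective_sub_diagOp (hω : ∀ i, ω i ≠ 0) (hμ : μ ∈ closure (range α))
    (hμ' : μ ∉ range α) :
    ¬ Function.Surjective (μ • LinearMap.id - diagOp ω α hα : Eomega K ω →ₗ[K] Eomega K ω) := by
  obtain ⟨ψ, hψ, hlim⟩ := (mapClusterPt_atTop_of_mem_closure_range hμ hμ').tendsto_subseq
  have hne : ∀ i, μ - α i ≠ 0 := fun i => sub_ne_zero.2 fun h => hμ' ⟨i, h.symm⟩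
  have hlim' : Tendsto ((fun i => μ - α i) ∘ ψ) atTop (𝓝 0) := by
    simpa [Function.comp_def] using (tendsto_const_nhds (x := μ)).sub hlim
  obtain ⟨u, hu, hdiv⟩ := Eomega.exists_mem_div_notMem hω hne hψ hlim'
  intro hsurj
  obtain ⟨w, hw⟩ := hsurj ⟨u, hu⟩
  have hwu : (fun i => u i / (μ - α i)) = w := funext fun i => by
    have hwi : (μ - α i) * (w : ℕ → K) i = u i := by
      rw [← sub_diagOp_apply (hα := hα), hw]
    rw [← hwi, mul_div_cancel_left₀ _ (hne i)]
  exact hdiv (hwu ▸ w.2)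

end diagOp

theorem mem_specSet_of_not_surjective {K : Type*} [NontriviallyNormedField K] {ω : ℕ → K}
    {D : Eomega K ω →ₗ[K] Eomega K ω} {μ : K}
    (h : ¬ Function.Surjective (μ • LinearMap.id - D : Eomega K ω →ₗ[K] Eomega K ω)) :
    μ ∈ specSet D := by
  rintro ⟨S, -, -, hright⟩
  exact h fun v => ⟨S v, LinearMap.congr_fun hright v⟩

theorem stmt12_general {K : Type*} [NontriviallyNormedField K]
    (ω : ℕ → K) (hω : ∀ i, ω i ≠ 0)
    (α : ℕ → K) (hα : ∃ C, ∀ i, ‖α i‖ ≤ C) :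
    properEssSpec (diagOp ω α hα) = closure (Set.range α) \ Set.range α := by
  ext μ
  simp only [properEssSpec, mem_ofPred_eq, Set.mem_sdiff, injective_sub_diagOp_iff]
  constructor
  · rintro ⟨-, hμ', hsurj⟩
    exact ⟨by_contra fun hμ => hsurj (surjective_sub_diagOp_of_notMem_closure hμ), hμ'⟩
  · rintro ⟨hμ, hμ'⟩
    have hsurj := not_surjective_sub_diagOp (hα := hα) hω hμ hμ'
    exact ⟨mem_specSet_of_not_surjective hsurj, hμ', hsurj⟩

/-- The proper essential spectrum of `D` equals the boundary set
of `Λ = {α i : i ∈ ℕ}`: `σ'_e(D) = closure(Λ) \\ Λ`. -/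
theorem stmt12 {K : Type*} [NontriviallyNormedField K] [CompleteSpace K]
    (hna : ∀ x y : K, ‖x + y‖ ≤ max ‖x‖ ‖y‖)
    (ω : ℕ → K) (hω : ∀ i, ω i ≠ 0)
    (α : ℕ → K) (hα : ∃ C, ∀ i, ‖α i‖ ≤ C) :
    properEssSpec (diagOp ω α hα) = closure (Set.range α) \ Set.range α :=
  stmt12_general ω hω α hα
end
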